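/- Suppose (Iₙˣ) and (Iₙˢ) are nonnegative sequences, 0 < μ < 1, α ≥ 0, κ ≥ 0 with κ/(λ⁻¹-k) < 1 where λ⁻¹ - k > 1, satisfying the coupled recursions I_{n+1}ˣ ≤ (κ/(λ⁻¹-k)) Iₙˣ + α μⁿ and I_{n+1}ˢ ≤ μ Iₙˢ + α μⁿ + (κ + α μⁿ) Iₙˣ. If additionally κ/(λ⁻¹-k) ≤ μ, then both Iₙˣ → 0 and Iₙˢ → 0 as n → ∞. -/

import Mathlib

/-!
Both inclinations obey a recursion `a (n + 1) ≤ μ * a n + ε n` with `0 ≤ μ < 1` and forcing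
`ε n → 0`: for `Ix` because `κ / (lam⁻¹ - k) ≤ μ`, with `ε n = α * μ ^ n`; for `Is` with
`ε n = α * μ ^ n + (κ + α * μ ^ n) * Ix n`, which tends to zero once `Ix` does. A nonnegative
sequence obeying such a recursion tends to zero: once `ε ≤ c`, it stays below `μ ^ m` times its
value plus `c / (1 - μ)`.
-/

open Filter Topology

theorem le_pow_mul_add_div_of_le_mul_add {μ c : ℝ} (hμ0 : 0 ≤ μ) (hμ1 : μ < 1) (hc : 0 ≤ c)
    {a : ℕ → ℝ} (hrec : ∀ n, a (n + 1) ≤ μ * a n + c) (m : ℕ) :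
    a m ≤ μ ^ m * a 0 + c / (1 - μ) := by
  induction m with
  | zero => simpa using div_nonneg hc (sub_pos.2 hμ1).le
  | succ m ih =>
    calc a (m + 1) ≤ μ * (μ ^ m * a 0 + c / (1 - μ)) + c :=
          by linarith [hrec m, mul_le_mul_of_nonneg_left ih hμ0]
      _ = μ ^ (m + 1) * a 0 + c / (1 - μ) := by
          field_simp [(sub_pos.2 hμ1).ne']
          ring

theorem tendsto_zero_of_le_mul_add {μ : ℝ} (hμ0 : 0 ≤ μ) (hμ1 : μ < 1) {a ε : ℕ → ℝ}
    (ha : ∀ n, 0 ≤ a n) (hrec : ∀ n, a (n + 1) ≤ μ * a n + ε n)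
    (hε : Tendsto ε atTop (𝓝 0)) : Tendsto a atTop (𝓝 0) := by
  refine tendsto_order.2 ⟨fun δ hδ => Eventually.of_forall fun n => hδ.trans_le (ha n),
    fun δ hδ => ?_⟩
  have hc : 0 < (1 - μ) * δ / 2 := by have := sub_pos.2 hμ1; positivity
  obtain ⟨N, hN⟩ := eventually_atTop.1 (hε.eventually (gt_mem_nhds hc))
  have hrecN (m : ℕ) : a (m + 1 + N) ≤ μ * a (m + N) + (1 - μ) * δ / 2 := by
    rw [add_right_comm]
    linarith [hrec (m + N), hN (m + N) (Nat.le_add_left N m)]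
  have hbound (m : ℕ) : a (m + N) ≤ μ ^ m * a N + δ / 2 := by
    have := le_pow_mul_add_div_of_le_mul_add hμ0 hμ1 hc.le (a := fun m => a (m + N)) hrecN m
    rwa [zero_add, mul_div_assoc, mul_div_cancel_left₀ _ (sub_pos.2 hμ1).ne'] at this
  have hpow : Tendsto (fun m => μ ^ m * a N) atTop (𝓝 0) := by
    simpa using (tendsto_pow_atTop_nhds_zero_of_lt_one hμ0 hμ1).mul_const (a N)
  obtain ⟨M, hM⟩ := eventually_atTop.1 (hpow.eventually (gt_mem_nhds (half_pos hδ)))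
  refine eventually_atTop.2 ⟨M + N, fun n hn => ?_⟩
  have hshift : n - N + N = n := Nat.sub_add_cancel (by omega)
  linarith [hshift ▸ hbound (n - N), hM (n - N) (by omega)]

theorem stmt_13_general (μ α κ lam k : ℝ) (hμ0 : 0 < μ) (hμ1 : μ < 1)
    (hle : κ / (lam⁻¹ - k) ≤ μ)
    (Ix Is : ℕ → ℝ) (hIx : ∀ n, 0 ≤ Ix n) (hIs : ∀ n, 0 ≤ Is n)
    (hrecx : ∀ n, Ix (n + 1) ≤ κ / (lam⁻¹ - k) * Ix n + α * μ ^ n)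
    (hrecs : ∀ n, Is (n + 1) ≤ μ * Is n + α * μ ^ n + (κ + α * μ ^ n) * Ix n) :
    Filter.Tendsto Ix Filter.atTop (nhds 0) ∧
      Filter.Tendsto Is Filter.atTop (nhds 0) := by
  have hgeom : Tendsto (fun n => α * μ ^ n) atTop (𝓝 0) := by
    simpa using (tendsto_pow_atTop_nhds_zero_of_lt_one hμ0.le hμ1).const_mul α
  have hrecx' (n : ℕ) : Ix (n + 1) ≤ μ * Ix n + α * μ ^ n := by
    linarith [hrecx n, mul_le_mul_of_nonneg_right hle (hIx n)]
  have hx : Tendsto Ix atTop (𝓝 0) := tendsto_zero_of_le_mul_add hμ0.le hμ1 hIx hrecx' hgeom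
  refine ⟨hx, tendsto_zero_of_le_mul_add hμ0.le hμ1 hIs
    (fun n => (hrecs n).trans_eq (add_assoc ..)) ?_⟩
  simpa using hgeom.add ((tendsto_const_nhds.add hgeom).mul hx)

theorem stmt_13 (μ α κ lam k : ℝ) (hμ0 : 0 < μ) (hμ1 : μ < 1)
    (hα : 0 ≤ α) (hκ : 0 ≤ κ) (hlk : lam⁻¹ - k > 1)
    (hcontr : κ / (lam⁻¹ - k) < 1) (hle : κ / (lam⁻¹ - k) ≤ μ)
    (Ix Is : ℕ → ℝ) (hIx : ∀ n, 0 ≤ Ix n) (hIs : ∀ n, 0 ≤ Is n)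
    (hrecx : ∀ n, Ix (n + 1) ≤ κ / (lam⁻¹ - k) * Ix n + α * μ ^ n)
    (hrecs : ∀ n, Is (n + 1) ≤ μ * Is n + α * μ ^ n + (κ + α * μ ^ n) * Ix n) :
    Filter.Tendsto Ix Filter.atTop (nhds 0) ∧
      Filter.Tendsto Is Filter.atTop (nhds 0) :=
  stmt_13_general μ α κ lam k hμ0 hμ1 hle Ix Is hIx hIs hrecx hrecs
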